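/- arXiv:q-alg/9503016 — 3 statements merged into one kernel-verified Lean document; each statement's English description precedes it below -/
import Mathlib

section
/- In a quasi-triangular Hopf algebra, the element u = Σ S(r²_σ) r¹_σ satisfies S²(ξ) = u ξ u^{-1} for all ξ, hence u is invertible and implements the square of the antipode. -/
/-!
Contracting the quasi-cocommutativity relation `τΔ(ξ) R = R Δ(ξ)` with `x ⊗ y ↦ S(y) x` gives
`Σ S(ξ₂) u ξ₁ = ε(ξ) u`, and coassociativity turns this into `u ξ = S²(ξ) u`. The relations
`(Δ ⊗ id) R = R₁₃ R₂₃` and `(id ⊗ Δ) R = R₁₃ R₁₂`, contracted with the antipode, give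
`(S ⊗ id) R = R⁻¹` and `(S ⊗ S) R = R`. Contracting `R R⁻¹ = 1` the same way then shows that
`Σ S(b) S²(a)` (where `R⁻¹ = Σ a ⊗ b`) is a left inverse and `Σ r² S²(r¹)` a right inverse of `u`.
-/

open TensorProduct

namespace Drinfeld

open Coalgebra HopfAlgebra

section FlipMul

variable {K A M N : Type*} [CommSemiring K] [Semiring A] [Algebra K A]
  [AddCommMonoid M] [Module K M] [AddCommMonoid N] [Module K N]

noncomputable def flipMul (f : N →ₗ[K] A) (g : M →ₗ[K] A) : M ⊗[K] N →ₗ[K] A :=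
  LinearMap.mul' K A ∘ₗ map f g ∘ₗ (TensorProduct.comm K M N).toLinearMap

@[simp]
lemma flipMul_tmul (f : N →ₗ[K] A) (g : M →ₗ[K] A) (m : M) (n : N) :
    flipMul f g (m ⊗ₜ n) = f n * g m := by
  simp [flipMul]

end FlipMul

variable {K A : Type*} [CommSemiring K] [Semiring A] [HopfAlgebra K A]

lemma eq_antipode_antipode_mul_of_flipMul_comul (f : A →ₗ[K] A) (c : A)
    (h : ∀ ξ : A, flipMul (antipode K) f (comul (R := K) ξ) = counit (R := K) ξ • c) (ξ : A) :
    f ξ = antipode K (antipode K ξ) * c := by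
  -- `P ((x ⊗ y) ⊗ z) = S²(z) S(y) f(x)`; coassociativity equates its values on the two
  -- bracketings of `Δ²ξ`, which are `S²(ξ) c` and `f ξ`.
  let P : (A ⊗[K] A) ⊗[K] A →ₗ[K] A :=
    flipMul (antipode K ∘ₗ antipode K) (flipMul (antipode K) f)
  have hleft : ∀ C : A ⊗[K] A, P ((comul (R := K)).rTensor A C) =
      antipode K (antipode K (TensorProduct.lid K A ((counit (R := K)).rTensor A C))) * c := by
    intro C
    induction C using TensorProduct.induction_on with
    | zero => simp
    | tmul a b => simp [P, h]
    | add C₁ C₂ h₁ h₂ => simp only [map_add, h₁, h₂, add_mul]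
  have hassoc : ∀ (a : A) (w : A ⊗[K] A), P ((TensorProduct.assoc K A A A).symm (a ⊗ₜ w)) =
      antipode K (LinearMap.mul' K A ((antipode K).lTensor A w)) * f a := by
    intro a w
    induction w using TensorProduct.induction_on with
    | zero => simp
    | tmul b c => simp [P, antipode_mul_antidistrib, mul_assoc]
    | add w₁ w₂ h₁ h₂ => simp only [tmul_add, map_add, h₁, h₂, add_mul]
  have hright : ∀ C : A ⊗[K] A,
      P ((TensorProduct.assoc K A A A).symm ((comul (R := K)).lTensor A C)) =
        f (TensorProduct.rid K A ((counit (R := K)).lTensor A C)) := by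
    intro C
    induction C using TensorProduct.induction_on with
    | zero => simp
    | tmul a b => simp [hassoc, Algebra.algebraMap_eq_smul_one]
    | add C₁ C₂ h₁ h₂ => simp only [map_add, h₁, h₂]
  have hξ := hright (comul (R := K) ξ)
  rw [coassoc_symm_apply, hleft, rTensor_counit_comul, lTensor_counit_comul] at hξ
  simpa using hξ.symm

noncomputable def drinfeldElement (R : A ⊗[K] A) : A := flipMul (antipode K) LinearMap.id R

local notation "Γ" => flipMul (antipode K) (LinearMap.id (R := K) (M := A))

lemma flipMul_antipode_id_mul (X C : A ⊗[K] A) :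
    Γ (X * C) = flipMul (antipode K) (LinearMap.mulLeft K (Γ X)) C := by
  induction C using TensorProduct.induction_on with
  | zero => simp
  | tmul c d =>
    induction X using TensorProduct.induction_on with
    | zero => simp
    | tmul a b => simp [antipode_mul_antidistrib, mul_assoc]
    | add X₁ X₂ h₁ h₂ => simp [add_mul, mul_add, h₁, h₂]
  | add C₁ C₂ h₁ h₂ => simp only [mul_add, map_add, h₁, h₂]

lemma flipMul_antipode_id_comm_comul_mul (ξ : A) (X : A ⊗[K] A) :
    Γ (TensorProduct.comm K A A (comul (R := K) ξ) * X) = counit (R := K) ξ • Γ X := by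
  have key : ∀ (C : A ⊗[K] A) (c d : A), Γ (TensorProduct.comm K A A C * (c ⊗ₜ d)) =
      antipode K d * LinearMap.mul' K A ((antipode K).rTensor A C) * c := by
    intro C c d
    induction C using TensorProduct.induction_on with
    | zero => simp
    | tmul a b => simp [antipode_mul_antidistrib, mul_assoc]
    | add C₁ C₂ h₁ h₂ => simp only [map_add, add_mul, mul_add, h₁, h₂]
  induction X using TensorProduct.induction_on with
  | zero => simp
  | tmul c d => simp [key, Algebra.algebraMap_eq_smul_one]
  | add X₁ X₂ h₁ h₂ => simp only [mul_add, map_add, h₁, h₂, smul_add]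

lemma flipMul_antipode_mulLeft_comul {R : A ⊗[K] A}
    (hcomm : ∀ ξ : A, TensorProduct.comm K A A (comul (R := K) ξ) * R = R * comul (R := K) ξ)
    (ξ : A) :
    flipMul (antipode K) (LinearMap.mulLeft K (drinfeldElement R)) (comul (R := K) ξ) =
      counit (R := K) ξ • drinfeldElement R := by
  rw [drinfeldElement, ← flipMul_antipode_id_mul, ← hcomm, flipMul_antipode_id_comm_comul_mul]

theorem drinfeldElement_mul {R : A ⊗[K] A}
    (hcomm : ∀ ξ : A, TensorProduct.comm K A A (comul (R := K) ξ) * R = R * comul (R := K) ξ)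
    (ξ : A) :
    drinfeldElement R * ξ = antipode K (antipode K ξ) * drinfeldElement R :=
  eq_antipode_antipode_mul_of_flipMul_comul _ _ (flipMul_antipode_mulLeft_comul hcomm) ξ

open Algebra.TensorProduct (includeLeft includeRight)

noncomputable def counitLeft : A ⊗[K] A →ₐ[K] A :=
  (Algebra.TensorProduct.lid K A).toAlgHom.comp
    (Algebra.TensorProduct.map (Bialgebra.counitAlgHom K A) (AlgHom.id K A))

noncomputable def counitRight : A ⊗[K] A →ₐ[K] A :=
  (Algebra.TensorProduct.rid K K A).toAlgHom.comp
    (Algebra.TensorProduct.map (AlgHom.id K A) (Bialgebra.counitAlgHom K A))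

@[simp]
lemma counitLeft_tmul (a b : A) : counitLeft (a ⊗ₜ[K] b) = counit (R := K) a • b := by
  simp [counitLeft]

@[simp]
lemma counitRight_tmul (a b : A) : counitRight (a ⊗ₜ[K] b) = counit (R := K) b • a := by
  simp [counitRight]

lemma counitLeft_comul (a : A) : counitLeft (comul (R := K) a) = a := by
  change TensorProduct.lid K A ((counit (R := K)).rTensor A (comul a)) = a
  rw [rTensor_counit_comul, lid_tmul, one_smul]

section Inverse

variable {R Rinv : A ⊗[K] A}

lemma counitLeft_eq_one (h : R * Rinv = 1)
    (hΔ₁ : map (comul (R := K)) LinearMap.id R =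
      Algebra.TensorProduct.map (includeLeft (S := K)) (AlgHom.id K A) R *
        Algebra.TensorProduct.map includeRight (AlgHom.id K A) R) :
    counitLeft R = 1 := by
  let G := Algebra.TensorProduct.map (counitLeft (K := K) (A := A)) (AlgHom.id K A)
  have hcomul : G.comp (Algebra.TensorProduct.map (Bialgebra.comulAlgHom K A) (AlgHom.id K A)) =
      AlgHom.id K _ := Algebra.TensorProduct.ext' fun a b => by simp [G, counitLeft_comul]
  have h13 : G.comp (Algebra.TensorProduct.map (includeLeft (S := K)) (AlgHom.id K A)) =
      includeRight.comp counitLeft :=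
    Algebra.TensorProduct.ext' fun a b => by simp [G, smul_tmul]
  have h23 : G.comp (Algebra.TensorProduct.map includeRight (AlgHom.id K A)) = AlgHom.id K _ :=
    Algebra.TensorProduct.ext' fun a b => by simp [G]
  have hfix : R = (1 ⊗ₜ counitLeft R) * R := by
    have := congrArg G hΔ₁
    change G (Algebra.TensorProduct.map (Bialgebra.comulAlgHom K A) (AlgHom.id K A) R) = _ at this
    rw [map_mul, ← AlgHom.comp_apply, ← AlgHom.comp_apply, ← AlgHom.comp_apply, hcomul, h13,
      h23] at this
    simpa using this
  have hone : (1 : A) ⊗ₜ[K] counitLeft R = 1 := by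
    calc (1 : A) ⊗ₜ[K] counitLeft R = (1 ⊗ₜ counitLeft R) * R * Rinv := by
          rw [mul_assoc, h, mul_one]
      _ = 1 := by rw [← hfix, h]
  simpa using congrArg counitLeft hone

lemma rTensor_antipode_eq_inv (h₁ : R * Rinv = 1)
    (hΔ₁ : map (comul (R := K)) LinearMap.id R =
      Algebra.TensorProduct.map (includeLeft (S := K)) (AlgHom.id K A) R *
        Algebra.TensorProduct.map includeRight (AlgHom.id K A) R) :
    (antipode K).rTensor A R = Rinv := by
  let J : (A ⊗[K] A) ⊗[K] A →ₗ[K] A ⊗[K] A :=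
    map (LinearMap.mul' K A ∘ₗ (antipode K).rTensor A) LinearMap.id
  have hcomul : ∀ X : A ⊗[K] A, J (map (comul (R := K)) LinearMap.id X) = 1 ⊗ₜ counitLeft X := by
    intro X
    induction X using TensorProduct.induction_on with
    | zero => simp
    | tmul a b => simp [J, Algebra.algebraMap_eq_smul_one, smul_tmul]
    | add X₁ X₂ h₁ h₂ => simp only [map_add, h₁, h₂, tmul_add]
  have hprod : ∀ X Y : A ⊗[K] A,
      J (Algebra.TensorProduct.map (includeLeft (S := K)) (AlgHom.id K A) X *
        Algebra.TensorProduct.map includeRight (AlgHom.id K A) Y) =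
      (antipode K).rTensor A X * Y := by
    intro X Y
    induction X using TensorProduct.induction_on with
    | zero => simp
    | tmul a b =>
      induction Y using TensorProduct.induction_on with
      | zero => simp
      | tmul c d => simp [J]
      | add Y₁ Y₂ h₁ h₂ => simp only [map_add, mul_add, h₁, h₂]
    | add X₁ X₂ h₁ h₂ => simp only [map_add, add_mul, h₁, h₂]
  have hinv : (antipode K).rTensor A R * R = 1 := by
    rw [← hprod, ← hΔ₁, hcomul, counitLeft_eq_one h₁ hΔ₁, Algebra.TensorProduct.one_def]
  exact left_inv_eq_right_inv hinv h₁

lemma counitRight_eq_one (h : Rinv * R = 1)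
    (hΔ₂ : (TensorProduct.assoc K A A A).symm.toLinearMap (map LinearMap.id (comul (R := K)) R) =
      Algebra.TensorProduct.map (includeLeft (S := K)) (AlgHom.id K A) R *
        includeLeft (R := K) (S := K) (A := A ⊗[K] A) (B := A) R) :
    counitRight R = 1 := by
  let G := Algebra.TensorProduct.map (counitRight (K := K) (A := A)) (AlgHom.id K A)
  have hassoc : ∀ (a : A) (w : A ⊗[K] A),
      G ((TensorProduct.assoc K A A A).symm (a ⊗ₜ w)) = a ⊗ₜ counitLeft w := by
    intro a w
    induction w using TensorProduct.induction_on with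
    | zero => simp
    | tmul b c => simp [G, smul_tmul]
    | add w₁ w₂ h₁ h₂ => simp only [tmul_add, map_add, h₁, h₂]
  have hcomul : ∀ X : A ⊗[K] A,
      G ((TensorProduct.assoc K A A A).symm (map LinearMap.id (comul (R := K)) X)) = X := by
    intro X
    induction X using TensorProduct.induction_on with
    | zero => simp
    | tmul a b => rw [map_tmul, LinearMap.id_apply, hassoc, counitLeft_comul]
    | add X₁ X₂ h₁ h₂ => simp only [map_add, h₁, h₂]
  have h13 : G.comp (Algebra.TensorProduct.map (includeLeft (S := K)) (AlgHom.id K A)) =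
      AlgHom.id K _ := Algebra.TensorProduct.ext' fun a b => by simp [G]
  have h12 : G.comp (includeLeft (S := K)) = (includeLeft (S := K)).comp counitRight :=
    Algebra.TensorProduct.ext' fun a b => by simp [G]
  have hfix : R = R * (counitRight R ⊗ₜ 1) := by
    have := congrArg G hΔ₂
    rw [LinearEquiv.coe_toLinearMap, hcomul, map_mul, ← AlgHom.comp_apply, ← AlgHom.comp_apply,
      h13, h12] at this
    simpa using this
  have hone : counitRight R ⊗ₜ[K] (1 : A) = 1 := by
    calc counitRight R ⊗ₜ[K] (1 : A) = Rinv * (R * (counitRight R ⊗ₜ 1)) := by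
          rw [← mul_assoc, h, one_mul]
      _ = 1 := by rw [← hfix, h]
  simpa using congrArg counitRight hone

lemma map_antipode_antipode_eq_self (h₁ : R * Rinv = 1) (h₂ : Rinv * R = 1)
    (hΔ₁ : map (comul (R := K)) LinearMap.id R =
      Algebra.TensorProduct.map (includeLeft (S := K)) (AlgHom.id K A) R *
        Algebra.TensorProduct.map includeRight (AlgHom.id K A) R)
    (hΔ₂ : (TensorProduct.assoc K A A A).symm.toLinearMap (map LinearMap.id (comul (R := K)) R) =
      Algebra.TensorProduct.map (includeLeft (S := K)) (AlgHom.id K A) R *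
        includeLeft (R := K) (S := K) (A := A ⊗[K] A) (B := A) R) :
    map (antipode K) (antipode K) R = R := by
  -- `J (x ⊗ y ⊗ z) = S x ⊗ y S(z)`; as `S` reverses products, `J` sends `R₁₃ R₁₂` to
  -- `(S ⊗ id) R · (S ⊗ S) R`.
  let J : A ⊗[K] (A ⊗[K] A) →ₗ[K] A ⊗[K] A :=
    map (antipode K) (LinearMap.mul' K A ∘ₗ (antipode K).lTensor A)
  have hcomul : ∀ X : A ⊗[K] A,
      J (map LinearMap.id (comul (R := K)) X) = antipode K (counitRight X) ⊗ₜ 1 := by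
    intro X
    induction X using TensorProduct.induction_on with
    | zero => simp
    | tmul a b => simp [J, Algebra.algebraMap_eq_smul_one, smul_tmul]
    | add X₁ X₂ h₁ h₂ => simp only [map_add, h₁, h₂, add_tmul]
  have hprod : ∀ X Y : A ⊗[K] A,
      J (TensorProduct.assoc K A A A
        (Algebra.TensorProduct.map (includeLeft (S := K)) (AlgHom.id K A) X *
          includeLeft (R := K) (S := K) (A := A ⊗[K] A) (B := A) Y)) =
      (antipode K).rTensor A Y * map (antipode K) (antipode K) X := by
    intro X Y
    induction X using TensorProduct.induction_on with
    | zero => simp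
    | tmul a b =>
      induction Y using TensorProduct.induction_on with
      | zero => simp
      | tmul c d => simp [J, antipode_mul_antidistrib]
      | add Y₁ Y₂ h₁ h₂ => simp only [map_add, mul_add, add_mul, h₁, h₂]
    | add X₁ X₂ h₁ h₂ => simp only [map_add, add_mul, mul_add, h₁, h₂]
  have hinv : Rinv * map (antipode K) (antipode K) R = 1 := by
    have := congrArg (fun Y => J (TensorProduct.assoc K A A A Y)) hΔ₂
    simp only [LinearEquiv.coe_toLinearMap, LinearEquiv.apply_symm_apply, hcomul, hprod,
      counitRight_eq_one h₂ hΔ₂, rTensor_antipode_eq_inv h₁ hΔ₁] at this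
    rw [← this, antipode_one, Algebra.TensorProduct.one_def]
  exact (left_inv_eq_right_inv h₁ hinv).symm

lemma flipMul_antipode_mulLeft_drinfeldElement_inv (h : R * Rinv = 1) :
    flipMul (antipode K) (LinearMap.mulLeft K (drinfeldElement R)) Rinv = 1 := by
  rw [drinfeldElement, ← flipMul_antipode_id_mul, h, Algebra.TensorProduct.one_def, flipMul_tmul,
    antipode_one, LinearMap.id_apply, one_mul]

lemma flipMul_antipodeSq_inv_mul_drinfeldElement
    (hcomm : ∀ ξ : A, TensorProduct.comm K A A (comul (R := K) ξ) * R = R * comul (R := K) ξ)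
    (h : R * Rinv = 1) :
    flipMul (antipode K) (antipode K ∘ₗ antipode K) Rinv * drinfeldElement R = 1 := by
  have key : ∀ w : A ⊗[K] A, flipMul (antipode K) (LinearMap.mulLeft K (drinfeldElement R)) w =
      flipMul (antipode K) (antipode K ∘ₗ antipode K) w * drinfeldElement R := by
    intro w
    induction w using TensorProduct.induction_on with
    | zero => simp
    | tmul a b => simp [drinfeldElement_mul hcomm, mul_assoc]
    | add w₁ w₂ h₁ h₂ => simp only [map_add, h₁, h₂, add_mul]
  rw [← key, flipMul_antipode_mulLeft_drinfeldElement_inv h]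

lemma drinfeldElement_mul_flipMul_antipodeSq
    (hcomm : ∀ ξ : A, TensorProduct.comm K A A (comul (R := K) ξ) * R = R * comul (R := K) ξ)
    (h : R * Rinv = 1) (hS : (antipode K).rTensor A R = Rinv)
    (hSS : map (antipode K) (antipode K) R = R) :
    drinfeldElement R * flipMul LinearMap.id (antipode K ∘ₗ antipode K) R = 1 := by
  have key : ∀ w : A ⊗[K] A,
      flipMul (antipode K) (LinearMap.mulLeft K (drinfeldElement R))
        ((antipode K).rTensor A (map (antipode K) (antipode K) w)) =
      drinfeldElement R * flipMul LinearMap.id (antipode K ∘ₗ antipode K) w := by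
    intro w
    induction w using TensorProduct.induction_on with
    | zero => simp
    | tmul a b =>
      simp only [LinearMap.rTensor_tmul, map_tmul, flipMul_tmul, LinearMap.mulLeft_apply,
        LinearMap.comp_apply, LinearMap.id_apply]
      rw [← mul_assoc, ← drinfeldElement_mul hcomm, mul_assoc]
    | add w₁ w₂ h₁ h₂ => simp only [map_add, h₁, h₂, mul_add]
  rw [← key, hSS, hS, flipMul_antipode_mulLeft_drinfeldElement_inv h]

end Inverse

lemma antipode_antipode_eq_drinfeldElement_mul_mul {R : A ⊗[K] A}
    (hcomm : ∀ ξ : A, TensorProduct.comm K A A (comul (R := K) ξ) * R = R * comul (R := K) ξ)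
    {v : A} (hv : drinfeldElement R * v = 1) (ξ : A) :
    antipode K (antipode K ξ) = drinfeldElement R * ξ * v := by
  rw [drinfeldElement_mul hcomm, mul_assoc, hv, mul_one]

end Drinfeld

/-- In a quasi-triangular Hopf algebra, the Drinfeld element
`u = Σ S(r²_σ) r¹_σ` is invertible and implements the square of the antipode:
`S²(ξ) = u ξ u⁻¹` for all `ξ`. -/
theorem drinfeld_u_implements_antipode_squared
    (A : Type*) [Ring A] [HopfAlgebra ℂ A]
    (R Rinv : A ⊗[ℂ] A)
    (hRinv : R * Rinv = 1 ∧ Rinv * R = 1)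
    (hqt0 : ∀ ξ : A, (TensorProduct.comm ℂ A A) (Coalgebra.comul (R := ℂ) ξ) * R
        = R * Coalgebra.comul (R := ℂ) ξ)
    (hqt1 : (TensorProduct.map (Coalgebra.comul (R := ℂ)) LinearMap.id) R =
        (Algebra.TensorProduct.map (Algebra.TensorProduct.includeLeft (S := ℂ)) (AlgHom.id ℂ A)) R *
        (Algebra.TensorProduct.map (Algebra.TensorProduct.includeRight) (AlgHom.id ℂ A)) R)
    (hqt2 : ((TensorProduct.assoc ℂ A A A).symm.toLinearMap)
        ((TensorProduct.map LinearMap.id (Coalgebra.comul (R := ℂ))) R) =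
        (Algebra.TensorProduct.map (Algebra.TensorProduct.includeLeft (S := ℂ)) (AlgHom.id ℂ A)) R *
        (Algebra.TensorProduct.includeLeft (R := ℂ) (S := ℂ) (A := A ⊗[ℂ] A) (B := A)) R) :
    ∃ uinv : A,
      (LinearMap.mul' ℂ A
          ((TensorProduct.map (HopfAlgebra.antipode (R := ℂ)) LinearMap.id)
            ((TensorProduct.comm ℂ A A) R))) * uinv = 1 ∧
      uinv * (LinearMap.mul' ℂ A
          ((TensorProduct.map (HopfAlgebra.antipode (R := ℂ)) LinearMap.id)
            ((TensorProduct.comm ℂ A A) R))) = 1 ∧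
      ∀ ξ : A,
        HopfAlgebra.antipode (R := ℂ) (HopfAlgebra.antipode (R := ℂ) ξ) =
          (LinearMap.mul' ℂ A
            ((TensorProduct.map (HopfAlgebra.antipode (R := ℂ)) LinearMap.id)
              ((TensorProduct.comm ℂ A A) R))) * ξ * uinv := by
  obtain ⟨h₁, h₂⟩ := hRinv
  have hright := Drinfeld.drinfeldElement_mul_flipMul_antipodeSq hqt0 h₁
    (Drinfeld.rTensor_antipode_eq_inv h₁ hqt1)
    (Drinfeld.map_antipode_antipode_eq_self h₁ h₂ hqt1 hqt2)
  have hleft := Drinfeld.flipMul_antipodeSq_inv_mul_drinfeldElement hqt0 h₁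
  refine ⟨_, hright, ?_, Drinfeld.antipode_antipode_eq_drinfeldElement_mul_mul hqt0 hright⟩
  rw [← left_inv_eq_right_inv hleft hright]
  exact hleft
end

section
/- With S and fusion rules as in the Verlinde setup, for each label J the assignment ϑ^J(c^I) = S_{IJ}/(N d_J) defines a one-dimensional representation (algebra homomorphism to ℂ) of the fusion algebra, and these exhaust all its irreducible representations; in particular ϑ^J(c^I c^K) = ϑ^J(c^I) ϑ^J(c^K). -/
/-!
By the Verlinde formula each `ϑ^J` is multiplicative on the basis `c^I`, so its linear extension
is an algebra homomorphism. The columns of `S` are orthonormal, hence not proportional, so the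
`|Λ|` characters `ϑ^J` are pairwise distinct. Distinct algebra homomorphisms `A → ℂ` are linearly
independent (Dedekind), so there are at most `dim A = |Λ|` of them, and the `ϑ^J` are all of them.
-/

theorem Module.Basis.exists_algHom_apply_eq {ι R A B : Type*} [CommSemiring R] [Semiring A]
    [Algebra R A] [Semiring B] [Algebra R B] (b : Module.Basis ι R A) (f : ι → B)
    (h_one : b.constr R f 1 = 1) (h_mul : ∀ i j, b.constr R f (b i * b j) = f i * f j) :
    ∃ φ : A →ₐ[R] B, ∀ i, φ (b i) = f i := by
  have h_bilin : (LinearMap.mul R A).compr₂ (b.constr R f)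
      = (LinearMap.mul R B).compl₁₂ (b.constr R f) (b.constr R f) :=
    b.ext fun i => b.ext fun j => by simp [h_mul]
  refine ⟨AlgHom.ofLinearMap (b.constr R f) h_one fun x y => ?_, b.constr_basis R f⟩
  exact LinearMap.congr_fun₂ h_bilin x y

theorem AlgHom.surjective_of_injective_of_basis {ι K A : Type*} [_root_.Finite ι] [CommRing K]
    [IsDomain K] [Ring A] [Algebra K A] (b : Module.Basis ι K A) {F : ι → A →ₐ[K] K}
    (hF : Function.Injective F) : Function.Surjective F := by
  have : Module.Finite K A := Module.Finite.of_basis b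
  have : Module.Free K A := Module.Free.of_basis b
  refine (hF.bijective_of_nat_card_le ?_).2
  calc Nat.card (A →ₐ[K] K) ≤ Module.finrank K A := card_algHom_le_finrank K A K
    _ = Nat.card ι := Module.finrank_eq_nat_card_basis b

theorem injective_column_div_of_orthonormal {ι K : Type*} [Fintype ι] [DecidableEq ι] [Field K]
    [StarRing K] {S : ι → ι → K}
    (hS : ∀ J J', ∑ I, S I J * starRingEnd K (S I J') = if J = J' then 1 else 0)
    {a : ι → K} (ha : ∀ J, a J ≠ 0) : Function.Injective fun J I => S I J / a J := by
  intro J J' h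
  have h_prop : ∀ I, S I J = a J / a J' * S I J' := fun I => by
    have := congr_fun h I
    field_simp [ha J, ha J'] at this ⊢
    linear_combination this
  have h_inner : ∑ I, S I J * starRingEnd K (S I J') = a J / a J' := by
    simp [h_prop, mul_assoc, ← Finset.mul_sum, hS]
  by_contra hne
  rw [hS, if_neg hne] at h_inner
  exact div_ne_zero (ha J) (ha J') h_inner.symm

/-- For each label `J`, the assignment `ϑ^J(c^I) = S_{IJ}/(N d_J)` defines a
one-dimensional representation (an algebra homomorphism to `ℂ`) of the fusion algebra, these
exhaust all irreducible representations (characters), and in particular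
`ϑ^J(c^I c^K) = ϑ^J(c^I) ϑ^J(c^K)`. -/
theorem verlinde_characters
    (Λ : Type*) [Fintype Λ] [DecidableEq Λ]
    (zero : Λ)
    (Nf : Λ → Λ → Λ → ℕ)
    (S : Λ → Λ → ℂ) (d : Λ → ℝ) (N : ℝ)
    (A : Type*) [CommRing A] [Algebra ℂ A]
    (c : Λ → A)
    (b : Module.Basis Λ ℂ A) (hb : ∀ I, b I = c I)
    (hmul : ∀ I J, c I * c J = ∑ K, (Nf I J K : ℂ) • c K)
    (hone : c zero = 1)
    (hd : ∀ K, 0 < d K)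
    (hN : N = (Real.sqrt (∑ K, d K ^ 2))⁻¹)
    (hSsymm : ∀ I J, S I J = S J I)
    (hS0 : ∀ J, S zero J = (N : ℂ) * (d J : ℂ))
    (hSunitary : ∀ I K, ∑ J, S I J * (starRingEnd ℂ) (S K J) = if I = K then 1 else 0)
    (hVerlinde : ∀ I J L, ∑ K, (Nf I J K : ℂ) * S K L
        = S I L * S J L / ((N : ℂ) * (d L : ℂ))) :
    (∀ J : Λ, ∃ φ : A →ₐ[ℂ] ℂ, ∀ I, φ (c I) = S I J / ((N : ℂ) * (d J : ℂ))) ∧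
    (∀ φ : A →ₐ[ℂ] ℂ, ∃ J : Λ, ∀ I, φ (c I) = S I J / ((N : ℂ) * (d J : ℂ))) ∧
    (∀ J I K, (∑ L, (Nf I K L : ℂ) * (S L J / ((N : ℂ) * (d J : ℂ))))
        = (S I J / ((N : ℂ) * (d J : ℂ))) * (S K J / ((N : ℂ) * (d J : ℂ)))) := by
  have hN_pos : 0 < N := hN ▸ inv_pos.mpr (Real.sqrt_pos.mpr
    (Finset.sum_pos (fun K _ => pow_pos (hd K) 2) ⟨zero, Finset.mem_univ zero⟩))
  have hNd : ∀ J, (N : ℂ) * (d J : ℂ) ≠ 0 := fun J =>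
    mul_ne_zero (Complex.ofReal_ne_zero.mpr hN_pos.ne') (Complex.ofReal_ne_zero.mpr (hd J).ne')
  have h_char : ∀ J I K, (∑ L, (Nf I K L : ℂ) * (S L J / ((N : ℂ) * (d J : ℂ))))
      = (S I J / ((N : ℂ) * (d J : ℂ))) * (S K J / ((N : ℂ) * (d J : ℂ))) := by
    intro J I K
    simp_rw [mul_div_assoc']
    rw [← Finset.sum_div, hVerlinde]
    ring
  have h_exists : ∀ J : Λ, ∃ φ : A →ₐ[ℂ] ℂ, ∀ I, φ (c I) = S I J / ((N : ℂ) * (d J : ℂ)) := by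
    intro J
    simp_rw [← hb] at hmul hone ⊢
    refine b.exists_algHom_apply_eq _ ?_ fun I K => ?_
    · rw [← hone, b.constr_basis, hS0, div_self (hNd J)]
    · simp only [hmul, map_sum, map_smul, b.constr_basis, smul_eq_mul, h_char]
  choose Φ hΦ using h_exists
  have h_cols : ∀ J J', ∑ I, S I J * starRingEnd ℂ (S I J') = if J = J' then 1 else 0 :=
    fun J J' => by
      rw [← hSunitary J J']
      exact Finset.sum_congr rfl fun I _ => by rw [hSsymm I J, hSsymm I J']
  have hΦ_inj : Function.Injective Φ := fun J J' h =>
    injective_column_div_of_orthonormal h_cols hNd (funext fun I => by simp only [← hΦ, h])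
  refine ⟨fun J => ⟨Φ J, hΦ J⟩, fun φ => ?_, h_char⟩
  obtain ⟨J, rfl⟩ := AlgHom.surjective_of_injective_of_basis b hΦ_inj φ
  exact ⟨J, hΦ J⟩
end

section
/- The embedded loop algebra image is invariant under the automorphisms i, j of the handle algebra: i(κ_I³ B^I (A^I)^{-1} (B^I)^{-1} A^I) = κ_I³ B^I (A^I)^{-1} (B^I)^{-1} A^I, where i(A^I) = κ_I^{-1} B^I A^I, i(B^I) = B^I (and similarly for j with roles of A and B exchanged). -/
open scoped BigOperators Kronecker

/-! Both automorphisms fix `b a⁻¹ b⁻¹ a`: for `i`, which fixes `b` and sends `a` to `κ⁻¹ b a`,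
the image of `a⁻¹` is `κ a⁻¹ b⁻¹`, and the extra factors `b⁻¹ b` and `κ κ⁻¹` cancel; `j` is the
mirror case. -/

theorem map_eq_of_mul_eq_one_of_map_mul_eq_one {M N F : Type*} [Monoid M] [Monoid N]
    [FunLike F M N] [MonoidHomClass F M N] (f : F) {a a' : M} {b' : N}
    (ha : a' * a = 1) (hb : f a * b' = 1) : f a' = b' :=
  left_inv_eq_right_inv (by rw [← map_mul, ha, map_one]) hb

section Commutator

variable {K S : Type*} [Field K] [Ring S] [Algebra K S] {κ : K} {a a' b b' : S}

theorem inv_smul_mul_mul_smul_mul_eq_one (hκ : κ ≠ 0) (ha : a * a' = 1) (hb : b * b' = 1) :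
    (κ⁻¹ • (b * a)) * (κ • (a' * b')) = 1 := by
  rw [smul_mul_smul_comm, inv_mul_cancel₀ hκ, one_smul, mul_assoc, ← mul_assoc a, ha, one_mul, hb]

theorem map_commutator_eq_self_of_fixes_b (φ : S →ₐ[K] S) (hκ : κ ≠ 0)
    (ha : a * a' = 1) (ha' : a' * a = 1) (hb : b * b' = 1) (hb' : b' * b = 1)
    (hφa : φ a = κ⁻¹ • (b * a)) (hφb : φ b = b) :
    φ (b * a' * b' * a) = b * a' * b' * a := by
  have hφa' : φ a' = κ • (a' * b') := map_eq_of_mul_eq_one_of_map_mul_eq_one φ ha' <| by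
    rw [hφa]; exact inv_smul_mul_mul_smul_mul_eq_one hκ ha hb
  have hφb' : φ b' = b' := map_eq_of_mul_eq_one_of_map_mul_eq_one φ hb' (by rw [hφb, hb])
  simp only [map_mul, hφa, hφb, hφa', hφb', mul_smul_comm, smul_mul_assoc, smul_smul,
    inv_mul_cancel₀ hκ, one_smul]
  calc b * (a' * b') * b' * (b * a) = b * a' * b' * (b' * b) * a := by noncomm_ring
    _ = b * a' * b' * a := by rw [hb', mul_one]

theorem map_commutator_eq_self_of_fixes_a (φ : S →ₐ[K] S) (hκ : κ ≠ 0)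
    (ha : a * a' = 1) (ha' : a' * a = 1) (hb : b * b' = 1) (hb' : b' * b = 1)
    (hφb : φ b = κ⁻¹ • (b * a)) (hφa : φ a = a) :
    φ (b * a' * b' * a) = b * a' * b' * a := by
  have hφb' : φ b' = κ • (a' * b') := map_eq_of_mul_eq_one_of_map_mul_eq_one φ hb' <| by
    rw [hφb]; exact inv_smul_mul_mul_smul_mul_eq_one hκ ha hb
  have hφa' : φ a' = a' := map_eq_of_mul_eq_one_of_map_mul_eq_one φ ha' (by rw [hφa, ha])
  simp only [map_mul, hφa, hφb, hφa', hφb', mul_smul_comm, smul_mul_assoc, smul_smul,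
    mul_inv_cancel₀ hκ, one_smul]
  calc b * a * a' * (a' * b') * a = b * (a * a') * a' * b' * a := by noncomm_ring
    _ = b * a' * b' * a := by rw [ha, mul_one]

end Commutator

theorem embedded_loop_invariant_under_i_j_general
    (Λ : Type*) (Vι : Λ → Type*) [∀ I, Fintype (Vι I)] [∀ I, DecidableEq (Vι I)]
    (T : Type*) [Ring T] [Algebra ℂ T]
    (κ : Λ → ℂ) (hκ : ∀ I, κ I ≠ 0)
    (MA MB Ainv Binv : ∀ I, Matrix (Vι I) (Vι I) T)
    (hAinv : ∀ I, MA I * Ainv I = 1 ∧ Ainv I * MA I = 1)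
    (hBinv : ∀ I, MB I * Binv I = 1 ∧ Binv I * MB I = 1)
    -- the automorphisms i and j, acting entrywise on the generator matrices
    (Φi Φj : T →ₐ[ℂ] T)
    (hΦiA : ∀ I, (MA I).map ⇑Φi = (κ I)⁻¹ • (MB I * MA I))
    (hΦiB : ∀ I, (MB I).map ⇑Φi = MB I)
    (hΦjB : ∀ I, (MB I).map ⇑Φj = (κ I)⁻¹ • (MB I * MA I))
    (hΦjA : ∀ I, (MA I).map ⇑Φj = MA I) :
    (∀ I, ((κ I) ^ 3 • (MB I * Ainv I * Binv I * MA I)).map ⇑Φi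
        = (κ I) ^ 3 • (MB I * Ainv I * Binv I * MA I)) ∧
    (∀ I, ((κ I) ^ 3 • (MB I * Ainv I * Binv I * MA I)).map ⇑Φj
        = (κ I) ^ 3 • (MB I * Ainv I * Binv I * MA I)) := by
  refine ⟨fun I => ?_, fun I => ?_⟩
  · change Φi.mapMatrix _ = _
    rw [map_smul, map_commutator_eq_self_of_fixes_b Φi.mapMatrix (hκ I) (hAinv I).1 (hAinv I).2
      (hBinv I).1 (hBinv I).2 (hΦiA I) (hΦiB I)]
  · change Φj.mapMatrix _ = _
    rw [map_smul, map_commutator_eq_self_of_fixes_a Φj.mapMatrix (hκ I) (hAinv I).1 (hAinv I).2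
      (hBinv I).1 (hBinv I).2 (hΦjB I) (hΦjA I)]

/-- The embedded loop algebra image is invariant under the automorphisms
`i`, `j` of the handle algebra: `i(κ_I³ B^I (A^I)⁻¹ (B^I)⁻¹ A^I) = κ_I³ B^I (A^I)⁻¹ (B^I)⁻¹ A^I`
where `i(A^I) = κ_I⁻¹ B^I A^I`, `i(B^I) = B^I`, and similarly for `j` (with the roles of
`A` and `B` exchanged). -/
theorem embedded_loop_invariant_under_i_j
    (Λ : Type*) (Vι : Λ → Type*) [∀ I, Fintype (Vι I)] [∀ I, DecidableEq (Vι I)]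
    (T : Type*) [Ring T] [Algebra ℂ T]
    (R Rp Rinv : ∀ I J : Λ, Matrix (Vι I × Vι J) (Vι I × Vι J) ℂ)
    (hRp : ∀ I J p q, Rp I J p q = R J I (p.2, p.1) (q.2, q.1))
    (hRinv : ∀ I J, R I J * Rinv I J = 1 ∧ Rinv I J * R I J = 1)
    (κ : Λ → ℂ) (hκ : ∀ I, κ I ≠ 0)
    (MA MB Ainv Binv : ∀ I, Matrix (Vι I) (Vι I) T)
    (hAinv : ∀ I, MA I * Ainv I = 1 ∧ Ainv I * MA I = 1)
    (hBinv : ∀ I, MB I * Binv I = 1 ∧ Binv I * MB I = 1)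
    -- the exchange relation of the AB-algebra
    (hex : ∀ I J, (Rinv I J).map (algebraMap ℂ T) * (MA I ⊗ₖ (1 : Matrix (Vι J) (Vι J) T)) *
        (R I J).map (algebraMap ℂ T) * ((1 : Matrix (Vι I) (Vι I) T) ⊗ₖ MB J)
        = ((1 : Matrix (Vι I) (Vι I) T) ⊗ₖ MB J) * (Rp I J).map (algebraMap ℂ T) *
          (MA I ⊗ₖ (1 : Matrix (Vι J) (Vι J) T)) * (R I J).map (algebraMap ℂ T))
    -- the automorphisms i and j, acting entrywise on the generator matrices
    (Φi Φj : T →ₐ[ℂ] T)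
    (hΦiA : ∀ I, (MA I).map ⇑Φi = (κ I)⁻¹ • (MB I * MA I))
    (hΦiB : ∀ I, (MB I).map ⇑Φi = MB I)
    (hΦjB : ∀ I, (MB I).map ⇑Φj = (κ I)⁻¹ • (MB I * MA I))
    (hΦjA : ∀ I, (MA I).map ⇑Φj = MA I) :
    (∀ I, ((κ I) ^ 3 • (MB I * Ainv I * Binv I * MA I)).map ⇑Φi
        = (κ I) ^ 3 • (MB I * Ainv I * Binv I * MA I)) ∧
    (∀ I, ((κ I) ^ 3 • (MB I * Ainv I * Binv I * MA I)).map ⇑Φj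
        = (κ I) ^ 3 • (MB I * Ainv I * Binv I * MA I)) :=
  embedded_loop_invariant_under_i_j_general Λ Vι T κ hκ MA MB Ainv Binv hAinv hBinv Φi Φj hΦiA hΦiB
    hΦjB hΦjA
end
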